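/- For any k ≥ 1, if U is a semi-Clifford element of 𝒞ₖ, then U⁻¹ ∈ 𝒞ₖ. -/
import Mathlib


open Matrix

/-- An `n`-qubit gate: a `2^n × 2^n` complex matrix with rows and columns indexed
by bitstrings `v ∈ 𝔽₂ⁿ`. -/
abbrev Gate (n : ℕ) := Matrix (Fin n → ZMod 2) (Fin n → ZMod 2) ℂ

def IsUnitaryGate {n : ℕ} (U : Gate n) : Prop :=
  U ∈ Matrix.unitaryGroup (Fin n → ZMod 2) ℂ

/-- The Pauli group `𝒫ₙ`: all matrices `c · X^u Z^v` with `c ∈ {1, -1, i, -i}`,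
which is exactly the set of matrices `c · P₁ ⊗ ⋯ ⊗ Pₙ` with `Pⱼ ∈ {I₂, X, Y, Z}`. -/
def PauliGroup (n : ℕ) : Set (Gate n) :=
  { P | ∃ (c : ℂ) (u v : Fin n → ZMod 2),
      (c = 1 ∨ c = -1 ∨ c = Complex.I ∨ c = -Complex.I) ∧
      P = Matrix.of fun a b =>
        if a = b + u then c * (-1 : ℂ) ^ (∑ i, (v i * b i).val) else 0 }

/-- The Clifford hierarchy: `𝒞₁ = 𝒫ₙ`, and for `k ≥ 2`,
`𝒞ₖ = {U unitary : U P U† ∈ 𝒞ₖ₋₁ for all P ∈ 𝒫ₙ}`.  (`CliffordHierarchy n k` is `𝒞ₖ`.) -/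
def CliffordHierarchy (n : ℕ) : ℕ → Set (Gate n)
  | 0 => PauliGroup n
  | 1 => PauliGroup n
  | k + 2 => { U | IsUnitaryGate U ∧
      ∀ P ∈ PauliGroup n, U * P * Uᴴ ∈ CliffordHierarchy n (k + 1) }

/-- The permutation gate mapping `|v⟩` to `|σ v⟩`. -/
def permGate {n : ℕ} (σ : Equiv.Perm (Fin n → ZMod 2)) : Gate n :=
  Matrix.of fun a b => if a = σ b then 1 else 0

def IsPermGate {n : ℕ} (U : Gate n) : Prop := ∃ σ, U = permGate σ

def IsDiagonalGate {n : ℕ} (U : Gate n) : Prop :=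
  IsUnitaryGate U ∧ ∀ a b, a ≠ b → U a b = 0

/-- A gate is semi-Clifford if it is `φ₁ d φ₂` with `φ₁, φ₂` Clifford and `d` a diagonal gate. -/
def IsSemiClifford {n : ℕ} (U : Gate n) : Prop :=
  ∃ φ₁ d φ₂ : Gate n, φ₁ ∈ CliffordHierarchy n 2 ∧ φ₂ ∈ CliffordHierarchy n 2 ∧
    IsDiagonalGate d ∧ U = φ₁ * d * φ₂

def IsCliffordPerm {n : ℕ} (U : Gate n) : Prop :=
  IsPermGate U ∧ U ∈ CliffordHierarchy n 2

section Aux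

open Matrix Finset

variable {n : ℕ}

/-! ### Phases -/

def IsPhase (c : ℂ) : Prop := c = 1 ∨ c = -1 ∨ c = Complex.I ∨ c = -Complex.I

lemma IsPhase.star {c : ℂ} (h : IsPhase c) : IsPhase (Star.star c) := by
  rcases h with rfl | rfl | rfl | rfl
  · exact Or.inl (by simp)
  · exact Or.inr (Or.inl (by simp))
  · exact Or.inr (Or.inr (Or.inr (by simp [Complex.star_def, Complex.conj_I])))
  · exact Or.inr (Or.inr (Or.inl (by simp [Complex.star_def, Complex.conj_I])))

lemma IsPhase.mul_star {c : ℂ} (h : IsPhase c) : c * Star.star c = 1 := by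
  rcases h with rfl | rfl | rfl | rfl <;>
    simp [Complex.star_def, Complex.conj_I, Complex.I_mul_I]

lemma IsPhase.mul {c c' : ℂ} (h : IsPhase c) (h' : IsPhase c') : IsPhase (c * c') := by
  rcases h with rfl | rfl | rfl | rfl <;> rcases h' with rfl | rfl | rfl | rfl <;>
    norm_num [IsPhase, Complex.I_mul_I]

lemma isPhase_neg_one_pow (m : ℕ) : IsPhase ((-1 : ℂ) ^ m) := by
  rcases Nat.even_or_odd m with h | h
  · exact Or.inl h.neg_one_pow
  · exact Or.inr (Or.inl h.neg_one_pow)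

/-! ### ZMod 2 vector arithmetic -/

lemma vadd_self (u : Fin n → ZMod 2) : u + u = 0 := by
  funext i
  have : ∀ y : ZMod 2, y + y = 0 := by decide
  exact this _

lemma add_add_self (a u : Fin n → ZMod 2) : a + u + u = a := by
  rw [add_assoc, vadd_self, add_zero]

lemma eq_add_comm' {a b u : Fin n → ZMod 2} : a = b + u ↔ b = a + u :=
  ⟨fun h => by rw [h, add_add_self], fun h => by rw [h, add_add_self]⟩

/-! ### Signs -/

noncomputable def pSign (v b : Fin n → ZMod 2) : ℂ := (-1 : ℂ) ^ (∑ i, (v i * b i).val)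

lemma isPhase_pSign (v b : Fin n → ZMod 2) : IsPhase (pSign v b) := isPhase_neg_one_pow _

lemma neg_one_pow_val_add (x y : ZMod 2) :
    (-1 : ℂ) ^ (x + y).val = (-1 : ℂ) ^ x.val * (-1 : ℂ) ^ y.val := by
  have h : ∀ z : ZMod 2, z = 0 ∨ z = 1 := by decide
  rcases h x with rfl | rfl <;> rcases h y with rfl | rfl <;>
    norm_num [show ((0 : ZMod 2) + 0).val = 0 from rfl, show ((0 : ZMod 2) + 1).val = 1 from rfl,
      show ((1 : ZMod 2) + 0).val = 1 from rfl, show ((1 : ZMod 2) + 1).val = 0 from rfl,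
      show ((0 : ZMod 2)).val = 0 from rfl, show (2 : ZMod 2).val = 0 from rfl, show ((1 : ZMod 2)).val = 1 from rfl]

lemma pSign_add_right (v b c : Fin n → ZMod 2) : pSign v (b + c) = pSign v b * pSign v c := by
  unfold pSign
  rw [← Finset.prod_pow_eq_pow_sum, ← Finset.prod_pow_eq_pow_sum, ← Finset.prod_pow_eq_pow_sum,
    ← Finset.prod_mul_distrib]
  refine Finset.prod_congr rfl fun i _ => ?_
  rw [Pi.add_apply, mul_add, neg_one_pow_val_add]

lemma pSign_add_left (v w b : Fin n → ZMod 2) : pSign (v + w) b = pSign v b * pSign w b := by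
  unfold pSign
  rw [← Finset.prod_pow_eq_pow_sum, ← Finset.prod_pow_eq_pow_sum, ← Finset.prod_pow_eq_pow_sum,
    ← Finset.prod_mul_distrib]
  refine Finset.prod_congr rfl fun i _ => ?_
  rw [Pi.add_apply, add_mul, neg_one_pow_val_add]

lemma pSign_mul_self (v b : Fin n → ZMod 2) : pSign v b * pSign v b = 1 := by
  have : ∀ m : ℕ, ((-1 : ℂ)) ^ m * (-1 : ℂ) ^ m = 1 := fun m => by
    rw [← pow_add]; exact Even.neg_one_pow ⟨m, rfl⟩
  exact this _

lemma pSign_star (v b : Fin n → ZMod 2) : star (pSign v b) = pSign v b := by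
  have : ∀ m : ℕ, star ((-1 : ℂ) ^ m) = (-1 : ℂ) ^ m := fun m => by
    rw [star_pow, star_neg, star_one]
  exact this _

/-! ### The basic Pauli matrices -/

noncomputable def pM (c : ℂ) (u v : Fin n → ZMod 2) : Gate n :=
  Matrix.of fun a b => if a = b + u then c * pSign v b else 0

lemma pM_apply (c : ℂ) (u v : Fin n → ZMod 2) (a b : Fin n → ZMod 2) :
    pM c u v a b = if a = b + u then c * pSign v b else 0 := rfl

lemma pauli_iff {P : Gate n} :
    P ∈ PauliGroup n ↔ ∃ c u v, IsPhase c ∧ P = pM c u v := Iff.rfl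

lemma pauli_mk {c : ℂ} {u v : Fin n → ZMod 2} (hc : IsPhase c) : pM c u v ∈ PauliGroup n :=
  ⟨c, u, v, hc, rfl⟩

lemma pM_mul_apply (c : ℂ) (u v : Fin n → ZMod 2) (M : Gate n) (a b : Fin n → ZMod 2) :
    (pM c u v * M) a b = c * pSign v (a + u) * M (a + u) b := by
  rw [Matrix.mul_apply, Finset.sum_eq_single (a + u)]
  · rw [pM_apply, if_pos (add_add_self a u).symm]
  · intro x _ hx
    rw [pM_apply, if_neg, zero_mul]
    exact fun hh => hx (eq_add_comm'.mp hh)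
  · exact fun h => absurd (Finset.mem_univ _) h

lemma mul_pMH_apply (M : Gate n) (c : ℂ) (u v : Fin n → ZMod 2) (a b : Fin n → ZMod 2) :
    (M * (pM c u v)ᴴ) a b = M a (b + u) * (star c * pSign v (b + u)) := by
  rw [Matrix.mul_apply, Finset.sum_eq_single (b + u)]
  · rw [conjTranspose_apply, pM_apply, if_pos (add_add_self b u).symm, star_mul', pSign_star]
  · intro x _ hx
    rw [conjTranspose_apply, pM_apply, if_neg, star_zero, mul_zero]
    exact fun hh => hx (eq_add_comm'.mp hh)
  · exact fun h => absurd (Finset.mem_univ _) h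

lemma pM_mul (c₁ c₂ : ℂ) (u₁ v₁ u₂ v₂ : Fin n → ZMod 2) :
    pM c₁ u₁ v₁ * pM c₂ u₂ v₂ = pM (c₁ * c₂ * pSign v₁ u₂) (u₁ + u₂) (v₁ + v₂) := by
  ext a b
  rw [pM_mul_apply, pM_apply, pM_apply]
  by_cases h : a + u₁ = b + u₂
  · have hc2 : a = b + (u₁ + u₂) := by
      rw [← add_add_self a u₁, h]; abel
    rw [if_pos h, if_pos hc2, h, pSign_add_right, pSign_add_left]
    ring
  · rw [if_neg h, mul_zero, if_neg]
    intro hh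
    apply h
    rw [hh, show b + (u₁ + u₂) + u₁ = b + u₂ + (u₁ + u₁) from by abel, vadd_self, add_zero]

lemma pM_conjTranspose (c : ℂ) (u v : Fin n → ZMod 2) :
    (pM c u v)ᴴ = pM (star c * pSign v u) u v := by
  ext a b
  rw [conjTranspose_apply, pM_apply, pM_apply]
  by_cases h : a = b + u
  · rw [if_pos (eq_add_comm'.mp h), if_pos h, star_mul', pSign_star, h, pSign_add_right]
    ring
  · rw [if_neg (fun hh => h (eq_add_comm'.mp hh)), if_neg h, star_zero]

lemma pM_one : (pM (1 : ℂ) 0 0 : Gate n) = 1 := by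
  ext a b
  rw [pM_apply, Matrix.one_apply]
  simp [pSign]

lemma pM_unitary {c : ℂ} {u v : Fin n → ZMod 2} (hc : IsPhase c) :
    IsUnitaryGate (pM c u v) := by
  show pM c u v ∈ Matrix.unitaryGroup _ ℂ
  rw [Matrix.mem_unitaryGroup_iff', Matrix.star_eq_conjTranspose, pM_conjTranspose, pM_mul,
    vadd_self, vadd_self]
  have e : star c * pSign v u * c * pSign v u = 1 := by
    calc star c * pSign v u * c * pSign v u = (c * star c) * (pSign v u * pSign v u) := by ring
      _ = 1 := by rw [hc.mul_star, pSign_mul_self, one_mul]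
  rw [e, pM_one]

/-! ### Pauli group lemmas -/

lemma pauli_unitary {P : Gate n} (hP : P ∈ PauliGroup n) : IsUnitaryGate P := by
  obtain ⟨c, u, v, hc, rfl⟩ := pauli_iff.mp hP
  exact pM_unitary hc

lemma pauli_conjTranspose {P : Gate n} (hP : P ∈ PauliGroup n) : Pᴴ ∈ PauliGroup n := by
  obtain ⟨c, u, v, hc, rfl⟩ := pauli_iff.mp hP
  rw [pM_conjTranspose]
  exact pauli_mk (hc.star.mul (isPhase_pSign v u))

lemma pauli_mul {P Q : Gate n} (hP : P ∈ PauliGroup n) (hQ : Q ∈ PauliGroup n) :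
    P * Q ∈ PauliGroup n := by
  obtain ⟨c₁, u₁, v₁, hc₁, rfl⟩ := pauli_iff.mp hP
  obtain ⟨c₂, u₂, v₂, hc₂, rfl⟩ := pauli_iff.mp hQ
  rw [pM_mul]
  exact pauli_mk ((hc₁.mul hc₂).mul (isPhase_pSign v₁ u₂))

lemma pauli_finite (n : ℕ) : (PauliGroup n).Finite := by
  have hsub : PauliGroup n ⊆
      (fun t : ℂ × ((Fin n → ZMod 2) × (Fin n → ZMod 2)) => pM t.1 t.2.1 t.2.2) ''
        (({1, -1, Complex.I, -Complex.I} : Set ℂ) ×ˢ (Set.univ : Set _)) := by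
    rintro P ⟨c, u, v, hc, rfl⟩
    exact ⟨⟨c, u, v⟩, ⟨by simpa using hc, Set.mem_univ _⟩, rfl⟩
  exact ((((((Set.finite_singleton _).insert _).insert _).insert _).prod Set.finite_univ).image _).subset hsub

/-! ### Unitary helpers -/

lemma IsUnitaryGate.mul {A B : Gate n} (hA : IsUnitaryGate A) (hB : IsUnitaryGate B) :
    IsUnitaryGate (A * B) :=
  show A * B ∈ Matrix.unitaryGroup _ ℂ from mul_mem hA hB

lemma IsUnitaryGate.adj {A : Gate n} (hA : IsUnitaryGate A) : IsUnitaryGate Aᴴ := by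
  show Aᴴ ∈ Matrix.unitaryGroup _ ℂ
  rw [← Matrix.star_eq_conjTranspose]
  exact Unitary.star_mem hA

lemma IsUnitaryGate.adj_mul {A : Gate n} (hA : IsUnitaryGate A) : Aᴴ * A = 1 := by
  have := Matrix.mem_unitaryGroup_iff'.mp hA
  rwa [Matrix.star_eq_conjTranspose] at this

lemma IsUnitaryGate.mul_adj {A : Gate n} (hA : IsUnitaryGate A) : A * Aᴴ = 1 := by
  have := Matrix.mem_unitaryGroup_iff.mp hA
  rwa [Matrix.star_eq_conjTranspose] at this

/-! ### Diagonal matrices -/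

lemma diag_mul_apply {A : Gate n} (hA : ∀ a b, a ≠ b → A a b = 0) (B : Gate n)
    (a b : Fin n → ZMod 2) : (A * B) a b = A a a * B a b := by
  rw [Matrix.mul_apply, Finset.sum_eq_single a]
  · intro x _ hx
    rw [hA a x (Ne.symm hx), zero_mul]
  · exact fun h => absurd (Finset.mem_univ _) h

lemma diag_comm {A B : Gate n} (hA : ∀ a b, a ≠ b → A a b = 0)
    (hB : ∀ a b, a ≠ b → B a b = 0) : A * B = B * A := by
  ext a b
  rw [diag_mul_apply hA, diag_mul_apply hB]
  by_cases h : a = b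
  · subst h; ring
  · rw [hA a b h, hB a b h, mul_zero, mul_zero]

lemma IsDiagonalGate.mulD {A B : Gate n} (hA : IsDiagonalGate A) (hB : IsDiagonalGate B) :
    IsDiagonalGate (A * B) :=
  ⟨hA.1.mul hB.1, fun a b h => by rw [diag_mul_apply hA.2, hB.2 a b h, mul_zero]⟩

lemma IsDiagonalGate.adjD {A : Gate n} (hA : IsDiagonalGate A) : IsDiagonalGate Aᴴ :=
  ⟨hA.1.adj, fun a b h => by rw [conjTranspose_apply, hA.2 b a (Ne.symm h), star_zero]⟩

lemma pauli_conj_diag {P M : Gate n} (hP : P ∈ PauliGroup n)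
    (hM : ∀ a b, a ≠ b → M a b = 0) : ∀ a b, a ≠ b → (P * M * Pᴴ) a b = 0 := by
  obtain ⟨c, u, v, hc, rfl⟩ := pauli_iff.mp hP
  intro a b h
  have hne : a + u ≠ b + u := fun hh => h (by rw [← add_add_self a u, hh, add_add_self])
  rw [mul_pMH_apply, pM_mul_apply, hM _ _ hne, mul_zero, zero_mul]

/-! ### Hierarchy lemmas -/

lemma hier_succ_iff (k : ℕ) (U : Gate n) :
    U ∈ CliffordHierarchy n (k + 2) ↔ IsUnitaryGate U ∧
      ∀ P ∈ PauliGroup n, U * P * Uᴴ ∈ CliffordHierarchy n (k + 1) := Iff.rfl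

lemma clifford_def (U : Gate n) :
    U ∈ CliffordHierarchy n 2 ↔ IsUnitaryGate U ∧
      ∀ P ∈ PauliGroup n, U * P * Uᴴ ∈ PauliGroup n := Iff.rfl

lemma hier_unitary : ∀ (k : ℕ) (U : Gate n), U ∈ CliffordHierarchy n k → IsUnitaryGate U
  | 0, _, h => pauli_unitary h
  | 1, _, h => pauli_unitary h
  | _ + 2, _, h => h.1

lemma conj_cancel {φ : Gate n} (h1 : φᴴ * φ = 1) (A : Gate n) :
    φᴴ * (φ * A * φᴴ) * φ = A := by
  calc φᴴ * (φ * A * φᴴ) * φ = (φᴴ * φ) * A * (φᴴ * φ) := by simp only [mul_assoc]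
    _ = A := by rw [h1, one_mul, mul_one]

lemma clifford_adj {φ : Gate n} (hφ : φ ∈ CliffordHierarchy n 2) :
    φᴴ ∈ CliffordHierarchy n 2 := by
  obtain ⟨hu, hc⟩ := (clifford_def φ).mp hφ
  have h1 : φᴴ * φ = 1 := hu.adj_mul
  refine (clifford_def _).mpr ⟨hu.adj, fun P hP => ?_⟩
  have hmaps : Set.MapsTo (fun Q => φ * Q * φᴴ) (PauliGroup n) (PauliGroup n) :=
    fun Q hQ => hc Q hQ
  have hinj : Set.InjOn (fun Q => φ * Q * φᴴ) (PauliGroup n) := by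
    intro Q1 _ Q2 _ heq
    calc Q1 = φᴴ * (φ * Q1 * φᴴ) * φ := (conj_cancel h1 Q1).symm
      _ = φᴴ * (φ * Q2 * φᴴ) * φ := by rw [show φ * Q1 * φᴴ = φ * Q2 * φᴴ from heq]
      _ = Q2 := conj_cancel h1 Q2
  have hbij := ((pauli_finite n).injOn_iff_bijOn_of_mapsTo hmaps).mp hinj
  obtain ⟨Q, hQ, hfQ⟩ := hbij.surjOn hP
  have : φᴴ * P * (φᴴ)ᴴ = Q := by
    rw [conjTranspose_conjTranspose, ← hfQ]
    exact conj_cancel h1 Q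
  rw [this]
  exact hQ

lemma conj_mem {φ : Gate n} (hφ : φ ∈ CliffordHierarchy n 2) :
    ∀ (k : ℕ) (W : Gate n), W ∈ CliffordHierarchy n k →
      φ * W * φᴴ ∈ CliffordHierarchy n k
  | 0, W, hW => ((clifford_def φ).mp hφ).2 W hW
  | 1, W, hW => ((clifford_def φ).mp hφ).2 W hW
  | k + 2, W, hW => by
    obtain ⟨hu, _⟩ := (clifford_def φ).mp hφ
    refine (hier_succ_iff _ _).mpr ⟨(hu.mul (hier_unitary _ _ hW)).mul hu.adj, fun P hP => ?_⟩
    have hPin : φᴴ * P * (φᴴ)ᴴ ∈ PauliGroup n := ((clifford_def _).mp (clifford_adj hφ)).2 P hP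
    rw [conjTranspose_conjTranspose] at hPin
    have key : (φ * W * φᴴ) * P * (φ * W * φᴴ)ᴴ = φ * (W * (φᴴ * P * φ) * Wᴴ) * φᴴ := by
      simp only [conjTranspose_mul, conjTranspose_conjTranspose, mul_assoc]
    rw [key]
    exact conj_mem hφ (k + 1) _ (((hier_succ_iff _ _).mp hW).2 _ hPin)

lemma mul_clifford_mem {W φ : Gate n} {k : ℕ} (hW : W ∈ CliffordHierarchy n (k + 2))
    (hφ : φ ∈ CliffordHierarchy n 2) : W * φ ∈ CliffordHierarchy n (k + 2) := by
  obtain ⟨hu, hc⟩ := (clifford_def φ).mp hφ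
  obtain ⟨hWu, hWc⟩ := (hier_succ_iff _ _).mp hW
  refine (hier_succ_iff _ _).mpr ⟨hWu.mul hu, fun P hP => ?_⟩
  have key : (W * φ) * P * (W * φ)ᴴ = W * (φ * P * φᴴ) * Wᴴ := by
    simp only [conjTranspose_mul, mul_assoc]
  rw [key]
  exact hWc _ (hc P hP)

lemma clifford_mul_mem {W φ : Gate n} {k : ℕ} (hφ : φ ∈ CliffordHierarchy n 2)
    (hW : W ∈ CliffordHierarchy n (k + 2)) : φ * W ∈ CliffordHierarchy n (k + 2) := by
  have hu : IsUnitaryGate φ := ((clifford_def φ).mp hφ).1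
  have h2 := mul_clifford_mem (conj_mem hφ (k + 2) W hW) hφ
  have e : (φ * W * φᴴ) * φ = φ * W := by
    rw [mul_assoc, hu.adj_mul, mul_one]
  rwa [e] at h2

lemma mul_pauli_mem : ∀ (k : ℕ) (W P : Gate n), W ∈ CliffordHierarchy n k →
    P ∈ PauliGroup n → 1 ≤ k → W * P ∈ CliffordHierarchy n k
  | 0, _, _, _, _, h => absurd h (by norm_num)
  | 1, W, P, hW, hP, _ => pauli_mul hW hP
  | k + 2, W, P, hW, hP, _ => by
    obtain ⟨hWu, hWc⟩ := (hier_succ_iff _ _).mp hW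
    refine (hier_succ_iff _ _).mpr ⟨hWu.mul (pauli_unitary hP), fun Q hQ => ?_⟩
    have key : (W * P) * Q * (W * P)ᴴ = W * (P * Q * Pᴴ) * Wᴴ := by
      simp only [conjTranspose_mul, mul_assoc]
    rw [key]
    exact hWc _ (pauli_mul (pauli_mul hP hQ) (pauli_conjTranspose hP))

lemma diag_adj_mem : ∀ (k : ℕ) (D : Gate n), IsDiagonalGate D →
    D ∈ CliffordHierarchy n k → Dᴴ ∈ CliffordHierarchy n k
  | 0, _, _, hD => pauli_conjTranspose hD
  | 1, _, _, hD => pauli_conjTranspose hD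
  | k + 2, D, hd, hD => by
    obtain ⟨hDu, hDc⟩ := (hier_succ_iff _ _).mp hD
    refine (hier_succ_iff _ _).mpr ⟨hDu.adj, fun P hP => ?_⟩
    have hPu := pauli_unitary hP
    have hP1 : P * Pᴴ = 1 := hPu.mul_adj
    have hdH : IsDiagonalGate Dᴴ := hd.adjD
    have hEmem : D * P * Dᴴ * Pᴴ ∈ CliffordHierarchy n (k + 1) :=
      mul_pauli_mem (k + 1) _ _ (hDc P hP) (pauli_conjTranspose hP) (by omega)
    have hEdiag : IsDiagonalGate (D * P * Dᴴ * Pᴴ) := by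
      have h1 : IsDiagonalGate (P * Dᴴ * Pᴴ) :=
        ⟨(hPu.mul hdH.1).mul hPu.adj, pauli_conj_diag hP hdH.2⟩
      have h2 := hd.mulD h1
      rwa [show D * (P * Dᴴ * Pᴴ) = D * P * Dᴴ * Pᴴ from by simp only [mul_assoc]] at h2
    have hEH := diag_adj_mem (k + 1) _ hEdiag hEmem
    have hGdiag : ∀ a b, a ≠ b → (Pᴴ * Dᴴ * P) a b = 0 := by
      have h3 := pauli_conj_diag (pauli_conjTranspose hP) hdH.2
      rwa [conjTranspose_conjTranspose] at h3
    have hkey : Dᴴ * P * (Dᴴ)ᴴ = (D * P * Dᴴ * Pᴴ)ᴴ * P := by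
      have hcomm : (Pᴴ * Dᴴ * P) * D = D * (Pᴴ * Dᴴ * P) := diag_comm hGdiag hd.2
      calc Dᴴ * P * (Dᴴ)ᴴ = Dᴴ * P * D := by rw [conjTranspose_conjTranspose]
        _ = P * ((Pᴴ * Dᴴ * P) * D) := by
            simp only [← mul_assoc]
            rw [hP1, one_mul]
        _ = P * (D * (Pᴴ * Dᴴ * P)) := by rw [hcomm]
        _ = (D * P * Dᴴ * Pᴴ)ᴴ * P := by
            simp only [conjTranspose_mul, conjTranspose_conjTranspose, ← mul_assoc]
    rw [hkey]
    exact mul_pauli_mem (k + 1) _ _ hEH hP (by omega)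

end Aux


/-- For any `k ≥ 1`, the inverse of any semi-Clifford element of `𝒞ₖ` is in `𝒞ₖ`. -/
theorem inv_of_semiClifford_mem (n k : ℕ) (hn : 1 ≤ n) (hk : 1 ≤ k) (U : Gate n)
    (hU : U ∈ CliffordHierarchy n k) (hsc : IsSemiClifford U) :
    U⁻¹ ∈ CliffordHierarchy n k := by
  have hUu : IsUnitaryGate U := hier_unitary k U hU
  have hinv : U⁻¹ = Uᴴ := Matrix.inv_eq_left_inv hUu.adj_mul
  rw [hinv]
  obtain ⟨φ₁, d, φ₂, h1, h2, hd, rfl⟩ := hsc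
  rcases Nat.lt_or_ge k 2 with hk2 | hk2
  · interval_cases k
    exact pauli_conjTranspose hU
  · obtain ⟨m, rfl⟩ : ∃ m, k = m + 2 := ⟨k - 2, by omega⟩
    have h1a := clifford_adj h1
    have h2a := clifford_adj h2
    have hφ1u : IsUnitaryGate φ₁ := ((clifford_def _).mp h1).1
    have hφ2u : IsUnitaryGate φ₂ := ((clifford_def _).mp h2).1
    have hdmem : d ∈ CliffordHierarchy n (m + 2) := by
      have s1 := mul_clifford_mem hU h2a
      have s2 := clifford_mul_mem h1a s1
      have e : φ₁ᴴ * ((φ₁ * d * φ₂) * φ₂ᴴ) = d := by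
        simp only [← mul_assoc]
        rw [hφ1u.adj_mul, one_mul, mul_assoc, hφ2u.mul_adj, mul_one]
      rwa [e] at s2
    have hdH := diag_adj_mem (m + 2) d hd hdmem
    have s3 := mul_clifford_mem hdH h1a
    have s4 := clifford_mul_mem h2a s3
    have e2 : (φ₁ * d * φ₂)ᴴ = φ₂ᴴ * (dᴴ * φ₁ᴴ) := by
      simp only [conjTranspose_mul, mul_assoc]
    rwa [e2]
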